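/- For a Fell bundle ρ: B ↠ Γ, the 2-norm on sections, defined by ‖a‖₂ = sup over units x and finite F ⊆ Γx of √‖Σ_{γ∈F} a(γ)*a(γ)‖, dominates the supremum norm and is subadditive: ‖a+b‖₂ ≤ ‖a‖₂ + ‖b‖₂ (as [0,∞]-valued norms). -/

import Mathlib

open Filter Topology

/-- An étale groupoid: a groupoid (partial multiplication encoded via `Option`,
with inverse, source and range maps) carrying a topology making inversion and
multiplication continuous, with open source map and a basis of open slices. -/
structure EtaleGroupoid (Γ : Type*) [TopologicalSpace Γ] where
  mul : Γ → Γ → Option Γ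
  inv : Γ → Γ
  s : Γ → Γ
  r : Γ → Γ
  s_unit : ∀ γ, mul γ (s γ) = some γ
  r_unit : ∀ γ, mul (r γ) γ = some γ
  mul_isSome : ∀ a b, (mul a b).isSome ↔ s a = r b
  inv_mul : ∀ γ, mul (inv γ) γ = some (s γ)
  mul_inv : ∀ γ, mul γ (inv γ) = some (r γ)
  inv_inv : ∀ γ, inv (inv γ) = γ
  s_inv : ∀ γ, s (inv γ) = r γ
  r_inv : ∀ γ, r (inv γ) = s γ
  s_s : ∀ γ, s (s γ) = s γ
  r_s : ∀ γ, r (s γ) = s γ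
  inv_s : ∀ γ, inv (s γ) = s γ
  s_r : ∀ γ, s (r γ) = r γ
  r_r : ∀ γ, r (r γ) = r γ
  inv_r : ∀ γ, inv (r γ) = r γ
  mul_s_s : ∀ γ, mul (s γ) (s γ) = some (s γ)
  mul_r_r : ∀ γ, mul (r γ) (r γ) = some (r γ)
  s_eq_r : ∀ {a b c}, mul a b = some c → s a = r b
  s_mul : ∀ {a b c}, mul a b = some c → s c = s b
  r_mul : ∀ {a b c}, mul a b = some c → r c = r a
  inv_mul_inv : ∀ {a b c}, mul a b = some c → mul (inv b) (inv a) = some (inv c)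
  mul_assoc' : ∀ {a b c p q pc}, mul a b = some p → mul b c = some q →
    mul p c = some pc → mul a q = some pc
  continuous_inv : Continuous inv
  continuous_s : Continuous s
  continuous_r : Continuous r
  isOpenMap_s : IsOpenMap s
  continuous_mul : Continuous fun p : {p : Γ × Γ // (mul p.1 p.2).isSome} =>
    (mul p.1.1 p.1.2).get p.2
  etale : ∀ γ : Γ, ∃ O : Set Γ, IsOpen O ∧ γ ∈ O ∧ Set.InjOn s O ∧ Set.InjOn r O

open scoped ENNReal NNReal

variable {Γ : Type*} [TopologicalSpace Γ]

/-- The unit space `Γ⁰` of an étale groupoid. -/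
def EtaleGroupoid.units (G : EtaleGroupoid Γ) : Set Γ := Set.range G.s

/-- A slice: a subset on which both the source and range maps are injective. -/
def EtaleGroupoid.IsSlice (G : EtaleGroupoid Γ) (B : Set Γ) : Prop :=
  Set.InjOn G.s B ∧ Set.InjOn G.r B

/-- Transport along an equality of base points between fibres. -/
def castE {X : Type*} {E : X → Type*} {α β : X} (h : α = β) (a : E α) : E β := h ▸ a

/-- A Fell bundle over an étale groupoid `G` on `Γ`: a Banach bundle whose
total space `Σ γ, E γ` is a topological *-semigroupoid over `Γ` with bilinear
products, antilinear involution, submultiplicative norm, the C*-identity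
`‖b*b‖ = ‖b‖²`, and every `b*b` a square `a*a` of an element of the unit
fibre over `s(ρ(b))`. -/
structure FellBundle {Γ : Type*} [TopologicalSpace Γ] (G : EtaleGroupoid Γ)
    (E : Γ → Type*) [∀ γ, NormedAddCommGroup (E γ)] [∀ γ, NormedSpace ℂ (E γ)]
    [∀ γ, CompleteSpace (E γ)] [TopologicalSpace (Σ γ, E γ)] where
  mul : ∀ {α β γ : Γ}, G.mul α β = some γ → E α → E β → E γ
  star : ∀ {γ : Γ}, E γ → E (G.inv γ)
  mul_add : ∀ {α β γ} (h : G.mul α β = some γ) (a : E α) (b c : E β),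
      mul h a (b + c) = mul h a b + mul h a c
  add_mul : ∀ {α β γ} (h : G.mul α β = some γ) (a b : E α) (c : E β),
      mul h (a + b) c = mul h a c + mul h b c
  smul_mul : ∀ {α β γ} (h : G.mul α β = some γ) (z : ℂ) (a : E α) (b : E β),
      mul h (z • a) b = z • mul h a b
  mul_smul : ∀ {α β γ} (h : G.mul α β = some γ) (z : ℂ) (a : E α) (b : E β),
      mul h a (z • b) = z • mul h a b
  mul_assoc : ∀ {a b c p q pc} (h1 : G.mul a b = some p) (h2 : G.mul b c = some q)
      (h3 : G.mul p c = some pc) (x : E a) (y : E b) (z : E c),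
      mul h3 (mul h1 x y) z = mul (G.mul_assoc' h1 h2 h3) x (mul h2 y z)
  star_add : ∀ {γ} (a b : E γ), star (a + b) = star a + star b
  star_smul : ∀ {γ} (z : ℂ) (a : E γ), star (z • a) = (starRingEnd ℂ z) • star a
  star_star : ∀ {γ} (a : E γ), star (star a) = castE (G.inv_inv γ).symm a
  star_mul : ∀ {α β γ} (h : G.mul α β = some γ) (a : E α) (b : E β),
      star (mul h a b) = mul (G.inv_mul_inv h) (star b) (star a)
  norm_mul_le : ∀ {α β γ} (h : G.mul α β = some γ) (a : E α) (b : E β),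
      ‖mul h a b‖ ≤ ‖a‖ * ‖b‖
  norm_star : ∀ {γ} (a : E γ), ‖star a‖ = ‖a‖
  cstar : ∀ {γ} (b : E γ), ‖mul (G.inv_mul γ) (star b) b‖ = ‖b‖ ^ 2
  exists_sq : ∀ {γ} (b : E γ), ∃ a : E (G.s γ),
      mul (G.mul_s_s γ) (castE (G.inv_s γ) (star a)) a = mul (G.inv_mul γ) (star b) b
  continuous_proj : Continuous (Sigma.fst : (Σ γ, E γ) → Γ)
  isOpenMap_proj : IsOpenMap (Sigma.fst : (Σ γ, E γ) → Γ)
  continuous_smul : ∀ z : ℂ, Continuous (fun b : Σ γ, E γ => (⟨b.1, z • b.2⟩ : Σ γ, E γ))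
  continuous_add : Continuous (fun p : {p : (Σ γ, E γ) × (Σ γ, E γ) // p.1.1 = p.2.1} =>
      (⟨p.1.1.1, p.1.1.2 + castE p.2.symm p.1.2.2⟩ : Σ γ, E γ))
  usc_norm : UpperSemicontinuous (fun b : Σ γ, E γ => ‖b.2‖)
  zero_lim : ∀ (l : Filter (Σ γ, E γ)) (x : Γ), Tendsto Sigma.fst l (𝓝 x) →
      Tendsto (fun b : Σ γ, E γ => ‖b.2‖) l (𝓝 (0 : ℝ)) →
      l ≤ 𝓝 (⟨x, 0⟩ : Σ γ, E γ)
  continuous_mul' : Continuous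
      (fun p : {p : (Σ γ, E γ) × (Σ γ, E γ) // (G.mul p.1.1 p.2.1).isSome} =>
        (⟨(G.mul p.1.1.1 p.1.2.1).get p.2,
          mul (Option.some_get p.2).symm p.1.1.2 p.1.2.2⟩ : Σ γ, E γ))
  continuous_star' : Continuous (fun b : Σ γ, E γ => (⟨G.inv b.1, star b.2⟩ : Σ γ, E γ))

namespace FellBundle

variable {G : EtaleGroupoid Γ} {E : Γ → Type*}
  [∀ γ, NormedAddCommGroup (E γ)] [∀ γ, NormedSpace ℂ (E γ)]
  [∀ γ, CompleteSpace (E γ)] [TopologicalSpace (Σ γ, E γ)]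

/-- The convolution product of two sections: `ab(γ) = Σ_{γ=αβ} a(α)b(β)`
(a `tsum`, i.e. junk value `0` if the sum does not converge unconditionally). -/
noncomputable def conv (F : FellBundle G E) (a b : ∀ γ, E γ) (γ : Γ) : E γ :=
  ∑' p : {p : Γ × Γ // G.mul p.1 p.2 = some γ}, F.mul p.2 (a p.1.1) (b p.1.2)

/-- The convolution product `ab` is defined: at each `γ` the net of finite
partial sums of `a(α)b(β)` over `γ = αβ` converges in the fibre `E γ`. -/
def ConvDefined (F : FellBundle G E) (a b : ∀ γ, E γ) : Prop :=
  ∀ γ : Γ, Summable (fun p : {p : Γ × Γ // G.mul p.1 p.2 = some γ} =>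
    F.mul p.2 (a p.1.1) (b p.1.2))

/-- The involution of sections: `a*(γ) = a(γ⁻¹)*`. -/
noncomputable def starSec (F : FellBundle G E) (a : ∀ γ, E γ) (γ : Γ) : E γ :=
  castE (G.inv_inv γ) (F.star (a (G.inv γ)))

/-- The pointwise *-square `a(γ)*a(γ) ∈ E (s γ)`. -/
noncomputable def starSq (F : FellBundle G E) (a : ∀ γ, E γ) (γ : Γ) : E (G.s γ) :=
  F.mul (G.inv_mul γ) (F.star (a γ)) (a γ)

/-- The (possibly infinite) supremum norm `‖a‖_∞` of a section. -/
noncomputable def supNorm (_F : FellBundle G E) (a : ∀ γ, E γ) : ℝ≥0∞ :=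
  ⨆ γ : Γ, (‖a γ‖₊ : ℝ≥0∞)

/-- The (possibly infinite) 2-norm
`‖a‖₂ = sup_{x} sup_{F ⊂ Γx finite} √‖Σ_{γ∈F} a(γ)*a(γ)‖`. -/
noncomputable def twoNorm (F : FellBundle G E) (a : ∀ γ, E γ) : ℝ≥0∞ :=
  ⨆ x : Γ, ⨆ s : Finset {γ : Γ // G.s γ = x},
    ENNReal.ofReal (Real.sqrt ‖∑ γ ∈ s, castE γ.prop (F.starSq a γ.val)‖)

/-- The (possibly infinite) 1-norm `‖a‖₁ = sup_{x∈Γ⁰} Σ_{γ∈Γx} ‖a(γ)‖`. -/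
noncomputable def oneNorm (_F : FellBundle G E) (a : ∀ γ, E γ) : ℝ≥0∞ :=
  ⨆ x : Γ, ∑' γ : {γ : Γ // G.s γ = x}, (‖a γ.val‖₊ : ℝ≥0∞)

/-- The (possibly infinite) b-norm
`‖a‖_b = sup {‖af‖₂/‖f‖₂ : f finitely supported}` (with `0/0 = 0`). -/
noncomputable def bNorm (F : FellBundle G E) (a : ∀ γ, E γ) : ℝ≥0∞ :=
  ⨆ f : {f : ∀ γ, E γ // {γ | f γ ≠ 0}.Finite},
    F.twoNorm (F.conv a f.val) / F.twoNorm f.val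

/-- Positivity in the C*-algebra unit fibre `E (s γ)`: being of the form `c*c`. -/
def posAt (F : FellBundle G E) (γ : Γ) (p : E (G.s γ)) : Prop :=
  ∃ c : E (G.s γ), p = F.mul (G.mul_s_s γ) (castE (G.inv_s γ) (F.star c)) c

/-- Positivity in the C*-algebra unit fibre `E (r γ)`: being of the form `c*c`. -/
def posAtR (F : FellBundle G E) (γ : Γ) (p : E (G.r γ)) : Prop :=
  ∃ c : E (G.r γ), p = F.mul (G.mul_r_r γ) (castE (G.inv_r γ) (F.star c)) c

end FellBundle

open Classical in
/-- The 0-restriction `a_Δ` of a section: equal to `a` on `Δ` and `0` elsewhere. -/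
noncomputable def restrictSec {Γ : Type*} {E : Γ → Type*} [∀ γ, NormedAddCommGroup (E γ)]
    (Δ : Set Γ) (a : ∀ γ, E γ) (γ : Γ) : E γ :=
  if γ ∈ Δ then a γ else 0

variable {Γ : Type*} [TopologicalSpace Γ] {G : EtaleGroupoid Γ} {E : Γ → Type*}
  [∀ γ, NormedAddCommGroup (E γ)] [∀ γ, NormedSpace ℂ (E γ)]
  [∀ γ, CompleteSpace (E γ)] [TopologicalSpace (Σ γ, E γ)]

/-!
Over a unit `x` the fibre `A = E x` is a C⋆-algebra, and for finite `s ⊆ Γx` the map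
`(f, g) ↦ Σ_{γ ∈ s} f(γ)* g(γ)` is an `A`-valued sesquilinear form, positive because every
`b*b` is a square `c*c` in `A`. Positivity of `⟨tv - t⁻¹w, tv - t⁻¹w⟩` gives
`⟨v + w, v + w⟩ ≤ (1 + t²)⟨v, v⟩ + (1 + t⁻²)⟨w, w⟩`; since the norm is monotone on positive
elements, optimising over `t` yields Minkowski's inequality
`‖⟨v + w, v + w⟩‖^½ ≤ ‖⟨v, v⟩‖^½ + ‖⟨w, w⟩‖^½`, which is subadditivity of the 2-norm.
The sup-norm bound is the case `s = {γ}`, by the C⋆-identity.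
-/

section castE

variable {X : Type*} {V : X → Type*}

theorem castE_castE {α β δ : X} (h₁ : α = β) (h₂ : β = δ) (a : V α) :
    castE h₂ (castE h₁ a) = castE (h₁.trans h₂) a := by
  subst h₁ h₂; rfl

variable [∀ x, NormedAddCommGroup (V x)]

theorem norm_castE {α β : X} (h : α = β) (a : V α) : ‖castE (E := V) h a‖ = ‖a‖ := by
  subst h; rfl

theorem castE_add {α β : X} (h : α = β) (a b : V α) :
    castE (E := V) h (a + b) = castE h a + castE h b := by
  subst h; rfl

theorem castE_smul [∀ x, NormedSpace ℂ (V x)] {α β : X} (h : α = β) (z : ℂ) (a : V α) :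
    castE (E := V) h (z • a) = z • castE h a := by
  subst h; rfl

end castE

theorem Real.sqrt_le_sqrt_add_sqrt_of_forall {n p q : ℝ} (hp : 0 ≤ p) (hq : 0 ≤ q)
    (h : ∀ t : ℝ, 0 < t → n ≤ (1 + t ^ 2) * p + (1 + t⁻¹ ^ 2) * q) :
    √n ≤ √p + √q := by
  set α := √p
  set β := √q
  have hα : 0 ≤ α := Real.sqrt_nonneg p
  have hβ : 0 ≤ β := Real.sqrt_nonneg q
  -- `t ^ 2 = (β + ε) / (α + ε)` perturbs the optimal choice `t ^ 2 = β / α`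
  have hε : ∀ ε : ℝ, 0 < ε → n ≤ (α + β) ^ 2 + ε * (α + β) := by
    intro ε hε
    have hr : 0 < (β + ε) / (α + ε) := by positivity
    have ht := h _ (Real.sqrt_pos.mpr hr)
    rw [inv_pow, Real.sq_sqrt hr.le, inv_div, ← Real.sq_sqrt hp, ← Real.sq_sqrt hq] at ht
    have h₁ : (β + ε) / (α + ε) * α ^ 2 ≤ (β + ε) * α := by
      rw [div_mul_eq_mul_div, div_le_iff₀ (by positivity)]
      nlinarith [mul_nonneg (add_nonneg hβ hε.le) hα]
    have h₂ : (α + ε) / (β + ε) * β ^ 2 ≤ (α + ε) * β := by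
      rw [div_mul_eq_mul_div, div_le_iff₀ (by positivity)]
      nlinarith [mul_nonneg (add_nonneg hα hε.le) hβ]
    nlinarith
  have hlim : Tendsto (fun ε : ℝ => (α + β) ^ 2 + ε * (α + β)) (𝓝[>] 0)
      (𝓝 ((α + β) ^ 2)) := by
    have hc : Continuous fun ε : ℝ => (α + β) ^ 2 + ε * (α + β) := by fun_prop
    simpa using tendsto_nhdsWithin_of_tendsto_nhds (hc.tendsto 0)
  have hsq : n ≤ (α + β) ^ 2 := ge_of_tendsto hlim (eventually_nhdsWithin_of_forall hε)
  exact Real.sqrt_le_iff.mpr ⟨by positivity, hsq⟩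

theorem CStarAlgebra.sqrt_norm_map_add_le {A V : Type*} [NonUnitalCStarAlgebra A]
    [PartialOrder A] [StarOrderedRing A] [AddCommGroup V] [Module ℂ V]
    (B : V →ₗ⋆[ℂ] V →ₗ[ℂ] A) (hB : ∀ v, 0 ≤ B v v) (v w : V) :
    √‖B (v + w) (v + w)‖ ≤ √‖B v v‖ + √‖B w w‖ := by
  refine Real.sqrt_le_sqrt_add_sqrt_of_forall (norm_nonneg _) (norm_nonneg _) fun t ht => ?_
  have hle : B (v + w) (v + w) ≤
      ((1 + t ^ 2 : ℝ) : ℂ) • B v v + ((1 + t⁻¹ ^ 2 : ℝ) : ℂ) • B w w := by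
    rw [← sub_nonneg]
    convert hB ((t : ℂ) • v - ((t⁻¹ : ℝ) : ℂ) • w) using 1
    have htt : (t : ℂ) * ((t⁻¹ : ℝ) : ℂ) = 1 := by
      rw [← Complex.ofReal_mul, mul_inv_cancel₀ ht.ne', Complex.ofReal_one]
    simp only [map_add, map_sub, map_smulₛₗ, LinearMap.add_apply, LinearMap.sub_apply,
      LinearMap.smul_apply, Complex.conj_ofReal, RingHom.id_apply, Complex.ofReal_add,
      Complex.ofReal_pow, Complex.ofReal_one]
    linear_combination (norm := module) htt • (B w v + B v w)
  calc ‖B (v + w) (v + w)‖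
      ≤ ‖((1 + t ^ 2 : ℝ) : ℂ) • B v v + ((1 + t⁻¹ ^ 2 : ℝ) : ℂ) • B w w‖ :=
        CStarAlgebra.norm_le_norm_of_nonneg_of_le (hB _) hle
    _ ≤ ‖((1 + t ^ 2 : ℝ) : ℂ) • B v v‖ + ‖((1 + t⁻¹ ^ 2 : ℝ) : ℂ) • B w w‖ := norm_add_le _ _
    _ = (1 + t ^ 2) * ‖B v v‖ + (1 + t⁻¹ ^ 2) * ‖B w w‖ := by
        rw [norm_smul, norm_smul, Complex.norm_real, Complex.norm_real,
          Real.norm_of_nonneg (by positivity), Real.norm_of_nonneg (by positivity)]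

namespace EtaleGroupoid

theorem inv_eq_self_of_s_eq (G : EtaleGroupoid Γ) {x : Γ} (hx : G.s x = x) : G.inv x = x := by
  simpa only [hx] using G.inv_s x

theorem mul_self_of_s_eq (G : EtaleGroupoid Γ) {x : Γ} (hx : G.s x = x) :
    G.mul x x = some x := by
  simpa only [hx] using G.mul_s_s x

end EtaleGroupoid

namespace FellBundle

variable (F : FellBundle G E)

theorem star_castE {α β : Γ} (h : α = β) (a : E α) :
    F.star (castE h a) = castE (congrArg G.inv h) (F.star a) := by
  subst h; rfl

theorem castE_mul {α α' β β' δ δ' : Γ} (h₁ : α = α') (h₂ : β = β') (h₃ : δ = δ')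
    (hm : G.mul α β = some δ) (hm' : G.mul α' β' = some δ') (a : E α) (b : E β) :
    castE h₃ (F.mul hm a b) = F.mul hm' (castE h₁ a) (castE h₂ b) := by
  subst h₁ h₂ h₃; rfl

/-- A type synonym for the fibre over a unit `x`, carrying its C⋆-algebra structure. -/
def UnitFiber (_F : FellBundle G E) (x : Γ) (_hx : G.s x = x) : Type _ := E x

end FellBundle

section UnitFiber

variable (F : FellBundle G E) {x : Γ} (hx : G.s x = x)

noncomputable instance : NormedAddCommGroup (F.UnitFiber x hx) :=
  inferInstanceAs (NormedAddCommGroup (E x))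

noncomputable instance : NormedSpace ℂ (F.UnitFiber x hx) :=
  inferInstanceAs (NormedSpace ℂ (E x))

instance : CompleteSpace (F.UnitFiber x hx) := inferInstanceAs (CompleteSpace (E x))

noncomputable instance : Mul (F.UnitFiber x hx) :=
  ⟨fun a b => F.mul (G.mul_self_of_s_eq hx) (a : E x) b⟩

noncomputable instance : Star (F.UnitFiber x hx) :=
  ⟨fun a => castE (G.inv_eq_self_of_s_eq hx) (F.star (a : E x))⟩

noncomputable instance : NonUnitalNormedRing (F.UnitFiber x hx) where
  left_distrib a b c := F.mul_add _ a b c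
  right_distrib a b c := F.add_mul _ a b c
  zero_mul a := by
    have h := F.add_mul (G.mul_self_of_s_eq hx) (0 : E x) 0 a
    rwa [add_zero, left_eq_add] at h
  mul_zero a := by
    have h := F.mul_add (G.mul_self_of_s_eq hx) a (0 : E x) 0
    rwa [add_zero, left_eq_add] at h
  mul_assoc a b c := F.mul_assoc _ _ _ a b c
  dist_eq := dist_eq_norm_neg_add
  norm_mul_le a b := F.norm_mul_le _ a b

noncomputable instance : StarRing (F.UnitFiber x hx) where
  star_involutive := fun (a : E x) => by
    change castE _ (F.star (castE _ (F.star (a : E x)))) = a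
    rw [F.star_castE, castE_castE, F.star_star, castE_castE]
    rfl
  star_mul := fun (a b : E x) => by
    change castE _ (F.star (F.mul _ (a : E x) b)) = _
    rw [F.star_mul]
    exact F.castE_mul _ _ _ _ _ _ _
  star_add := fun (a b : E x) => by
    change castE _ (F.star ((a : E x) + b)) = _
    rw [F.star_add, castE_add]
    rfl

noncomputable instance : CStarRing (F.UnitFiber x hx) where
  norm_mul_self_le b := by
    have hb : star b * b = castE hx (F.mul (G.inv_mul x) (F.star (b : E x)) b) :=
      (F.castE_mul _ rfl hx _ _ _ _).symm
    have hnorm : ‖castE hx (F.mul (G.inv_mul x) (F.star (b : E x)) b)‖ = ‖b‖ * ‖b‖ := by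
      rw [norm_castE]
      exact (F.cstar b).trans (sq _)
    exact (hnorm.symm.trans (congrArg norm hb.symm)).le

instance : IsScalarTower ℂ (F.UnitFiber x hx) (F.UnitFiber x hx) :=
  ⟨fun z a b => F.smul_mul _ z a b⟩

instance : SMulCommClass ℂ (F.UnitFiber x hx) (F.UnitFiber x hx) :=
  ⟨fun z a b => (F.mul_smul _ z a b).symm⟩

instance : StarModule ℂ (F.UnitFiber x hx) :=
  ⟨fun z (a : E x) => by
    change castE _ (F.star (z • a)) = _
    rw [F.star_smul, castE_smul]
    rfl⟩

noncomputable instance : NonUnitalCStarAlgebra (F.UnitFiber x hx) where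

noncomputable instance : PartialOrder (F.UnitFiber x hx) := CStarAlgebra.spectralOrder _

instance : StarOrderedRing (F.UnitFiber x hx) := CStarAlgebra.spectralOrderedRing _

end UnitFiber

namespace FellBundle

variable (F : FellBundle G E)

section Gram

variable {x : Γ} (hx : G.s x = x)

theorem castE_starSq_nonneg (f : ∀ γ, E γ) {γ : Γ} (hγ : G.s γ = x) :
    (0 : F.UnitFiber x hx) ≤ castE hγ (F.starSq f γ) := by
  subst hγ
  obtain ⟨c, hc⟩ := F.exists_sq (f γ)
  exact (star_mul_self_nonneg (R := F.UnitFiber _ hx) c).trans_eq hc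

noncomputable def gram (s : Finset {γ : Γ // G.s γ = x}) :
    (∀ γ, E γ) →ₗ⋆[ℂ] (∀ γ, E γ) →ₗ[ℂ] F.UnitFiber x hx :=
  LinearMap.mk₂'ₛₗ (starRingEnd ℂ) (RingHom.id ℂ)
    (fun f g => ∑ γ ∈ s,
      (castE γ.prop (F.mul (G.inv_mul γ.val) (F.star (f γ)) (g γ)) : F.UnitFiber x hx))
    (fun f f' g => by
      simp only [Pi.add_apply, F.star_add, F.add_mul, castE_add]
      exact Finset.sum_add_distrib)
    (fun z f g => by
      simp only [Pi.smul_apply, F.star_smul, F.smul_mul, castE_smul]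
      exact (Finset.smul_sum ..).symm)
    (fun f g g' => by
      simp only [Pi.add_apply, F.mul_add, castE_add]
      exact Finset.sum_add_distrib)
    (fun z f g => by
      simp only [Pi.smul_apply, F.mul_smul, castE_smul]
      exact (Finset.smul_sum ..).symm)

theorem gram_self_nonneg (s : Finset {γ : Γ // G.s γ = x}) (f : ∀ γ, E γ) :
    0 ≤ F.gram hx s f f :=
  Finset.sum_nonneg fun γ _ => F.castE_starSq_nonneg hx f γ.prop

end Gram

theorem sqrt_norm_sum_starSq_add_le {x : Γ} (hx : G.s x = x) (s : Finset {γ : Γ // G.s γ = x})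
    (a b : ∀ γ, E γ) :
    √‖∑ γ ∈ s, castE γ.prop (F.starSq (fun γ => a γ + b γ) γ.val)‖ ≤
      √‖∑ γ ∈ s, castE γ.prop (F.starSq a γ.val)‖ +
        √‖∑ γ ∈ s, castE γ.prop (F.starSq b γ.val)‖ :=
  CStarAlgebra.sqrt_norm_map_add_le (F.gram hx s) (F.gram_self_nonneg hx s) a b

theorem le_twoNorm (a : ∀ γ, E γ) (x : Γ) (s : Finset {γ : Γ // G.s γ = x}) :
    ENNReal.ofReal √‖∑ γ ∈ s, castE γ.prop (F.starSq a γ.val)‖ ≤ F.twoNorm a :=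
  le_iSup₂ (f := fun x (s : Finset {γ : Γ // G.s γ = x}) =>
    ENNReal.ofReal √‖∑ γ ∈ s, castE γ.prop (F.starSq a γ.val)‖) x s

theorem supNorm_le_twoNorm (a : ∀ γ, E γ) : F.supNorm a ≤ F.twoNorm a := by
  refine iSup_le fun γ => ?_
  have hγ : ‖∑ δ ∈ ({⟨γ, rfl⟩} : Finset {δ : Γ // G.s δ = G.s γ}),
      castE δ.prop (F.starSq a δ.val)‖ = ‖a γ‖ ^ 2 := by
    rw [Finset.sum_singleton]
    exact F.cstar (a γ)
  have := F.le_twoNorm a (G.s γ) {⟨γ, rfl⟩}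
  rwa [hγ, Real.sqrt_sq (norm_nonneg _), ofReal_norm] at this

theorem twoNorm_add_le (a b : ∀ γ, E γ) :
    F.twoNorm (fun γ => a γ + b γ) ≤ F.twoNorm a + F.twoNorm b := by
  refine iSup₂_le fun x s => ?_
  obtain rfl | ⟨γ, -⟩ := s.eq_empty_or_nonempty
  · simp
  have hx : G.s x = x := γ.prop ▸ G.s_s γ
  calc ENNReal.ofReal √‖∑ γ ∈ s, castE γ.prop (F.starSq (fun γ => a γ + b γ) γ.val)‖
      ≤ ENNReal.ofReal (√‖∑ γ ∈ s, castE γ.prop (F.starSq a γ.val)‖ +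
          √‖∑ γ ∈ s, castE γ.prop (F.starSq b γ.val)‖) :=
        ENNReal.ofReal_le_ofReal (F.sqrt_norm_sum_starSq_add_le hx s a b)
    _ = ENNReal.ofReal √‖∑ γ ∈ s, castE γ.prop (F.starSq a γ.val)‖ +
          ENNReal.ofReal √‖∑ γ ∈ s, castE γ.prop (F.starSq b γ.val)‖ :=
        ENNReal.ofReal_add (Real.sqrt_nonneg _) (Real.sqrt_nonneg _)
    _ ≤ F.twoNorm a + F.twoNorm b := add_le_add (F.le_twoNorm a x s) (F.le_twoNorm b x s)

end FellBundle

/-- The 2-norm dominates the supremum norm and is subadditive. -/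
theorem stmt12 (F : FellBundle G E) (a b : ∀ γ, E γ) :
    F.supNorm a ≤ F.twoNorm a ∧
    F.twoNorm (fun γ => a γ + b γ) ≤ F.twoNorm a + F.twoNorm b :=
  ⟨F.supNorm_le_twoNorm a, F.twoNorm_add_le a b⟩
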